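/- arXiv:2105.10703 — 7 statements merged into one kernel-verified Lean document; each statement's English description precedes it below -/
import Mathlib

section
/- Suppose φ satisfies the stated assumption and the kernel assumption holds. Then the objective function F is coercive on ℝ^N, i.e., F(x) → +∞ as ‖x‖₂ → +∞ (for every R ∈ ℝ there exists r > 0 such that ‖x‖₂ > r implies F(x) > R). -/
/-- The dot product `gᵀ x` of two vectors in `ℝ^N`. -/
noncomputable def dotp {N : ℕ} (g x : Fin N → ℝ) : ℝ := ∑ l, g l * x l

/-- The Euclidean norm `‖x‖₂` on `ℝ^N`. -/
noncomputable def norm2 {N : ℕ} (x : Fin N → ℝ) : ℝ := Real.sqrt (∑ l, (x l) ^ 2)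

/-- Assumptions on the potential function `φ` (with derivative `φ'` on `(0,∞)`):
continuous, concave and coercive on `[0,∞)` with `φ(0) = 0`; continuously
differentiable on `(0,∞)` with positive derivative there, `φ'(0⁺) = +∞`, and
`φ'` Lipschitz on every `[α,∞)` with `α > 0`. -/
structure PhiAssumption (φ φ' : ℝ → ℝ) : Prop where
  nonneg : ∀ t : ℝ, 0 ≤ t → 0 ≤ φ t
  zero : φ 0 = 0
  cont : ContinuousOn φ (Set.Ici 0)
  concave : ConcaveOn ℝ (Set.Ici 0) φ
  coercive : Filter.Tendsto φ Filter.atTop Filter.atTop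
  hasDeriv : ∀ t : ℝ, 0 < t → HasDerivAt φ (φ' t) t
  derivCont : ContinuousOn φ' (Set.Ioi 0)
  derivPos : ∀ t : ℝ, 0 < t → 0 < φ' t
  derivAtZero : Filter.Tendsto φ' (nhdsWithin 0 (Set.Ioi 0)) Filter.atTop
  derivLip : ∀ α : ℝ, 0 < α → ∃ L : ℝ, ∀ s : ℝ, α ≤ s → ∀ t : ℝ, α ≤ t →
    |φ' s - φ' t| ≤ L * |s - t|

/-- The objective function
`F(x) = Σ_{i∈J} φ(|G_iᵀ x|) + (β/q) ‖Ax − b‖_q^q`. -/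
noncomputable def objF {M N : ℕ} {ι : Type} [Fintype ι] (φ : ℝ → ℝ)
    (A : Matrix (Fin M) (Fin N) ℝ) (b : Fin M → ℝ) (G : ι → Fin N → ℝ)
    (β q : ℝ) (x : Fin N → ℝ) : ℝ :=
  (∑ i : ι, φ |dotp (G i) x|) + (β / q) * ∑ l, |A.mulVec x l - b l| ^ q

section aux
variable {M N : ℕ} {ι : Type} [Fintype ι]

noncomputable def gfun (A : Matrix (Fin M) (Fin N) ℝ) (G : ι → Fin N → ℝ)
    (x : Fin N → ℝ) : ℝ :=
  (∑ l, |A.mulVec x l|) + ∑ i, |dotp (G i) x|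

lemma dotp_cont (g : Fin N → ℝ) : Continuous (fun x : Fin N → ℝ => dotp g x) := by
  unfold dotp
  exact continuous_finset_sum _ fun l _ => continuous_const.mul (continuous_apply l)

lemma mulVec_apply_cont (A : Matrix (Fin M) (Fin N) ℝ) (l : Fin M) :
    Continuous (fun x : Fin N → ℝ => A.mulVec x l) := by
  have : (fun x : Fin N → ℝ => A.mulVec x l) = fun x => dotp (A l) x := by
    funext x; rfl
  rw [this]; exact dotp_cont _

lemma gfun_cont (A : Matrix (Fin M) (Fin N) ℝ) (G : ι → Fin N → ℝ) :
    Continuous (gfun A G) := by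
  unfold gfun
  exact (continuous_finset_sum _ fun l _ => (mulVec_apply_cont A l).abs).add
    (continuous_finset_sum _ fun i _ => (dotp_cont (G i)).abs)

lemma gfun_nonneg (A : Matrix (Fin M) (Fin N) ℝ) (G : ι → Fin N → ℝ) (x : Fin N → ℝ) :
    0 ≤ gfun A G x :=
  add_nonneg (Finset.sum_nonneg fun _ _ => abs_nonneg _)
    (Finset.sum_nonneg fun _ _ => abs_nonneg _)

lemma dotp_smul (g : Fin N → ℝ) (t : ℝ) (x : Fin N → ℝ) :
    dotp g (t • x) = t * dotp g x := by
  unfold dotp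
  rw [Finset.mul_sum]
  refine Finset.sum_congr rfl fun l _ => ?_
  simp [Pi.smul_apply, smul_eq_mul]; ring

lemma gfun_smul (A : Matrix (Fin M) (Fin N) ℝ) (G : ι → Fin N → ℝ) (t : ℝ) (ht : 0 ≤ t)
    (x : Fin N → ℝ) : gfun A G (t • x) = t * gfun A G x := by
  unfold gfun
  rw [mul_add, Finset.mul_sum, Finset.mul_sum]
  congr 1
  · refine Finset.sum_congr rfl fun l _ => ?_
    rw [A.mulVec_smul]
    simp [Pi.smul_apply, smul_eq_mul, abs_mul, abs_of_nonneg ht]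
  · refine Finset.sum_congr rfl fun i _ => ?_
    rw [dotp_smul, abs_mul, abs_of_nonneg ht]

lemma norm2_nonneg (x : Fin N → ℝ) : 0 ≤ norm2 x := Real.sqrt_nonneg _

lemma norm2_cont : Continuous (fun x : Fin N → ℝ => norm2 x) := by
  unfold norm2
  exact (continuous_finset_sum _ fun l _ => (continuous_apply l).pow 2).sqrt

lemma abs_le_norm2 (x : Fin N → ℝ) (l : Fin N) : |x l| ≤ norm2 x := by
  unfold norm2
  rw [← Real.sqrt_sq_eq_abs]
  exact Real.sqrt_le_sqrt (Finset.single_le_sum (f := fun m => (x m) ^ 2)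
    (fun m _ => sq_nonneg _) (Finset.mem_univ l))

lemma norm2_smul (t : ℝ) (x : Fin N → ℝ) : norm2 (t • x) = |t| * norm2 x := by
  unfold norm2
  have : ∑ l, ((t • x) l) ^ 2 = t ^ 2 * ∑ l, (x l) ^ 2 := by
    rw [Finset.mul_sum]
    refine Finset.sum_congr rfl fun l _ => ?_
    simp [Pi.smul_apply, smul_eq_mul]; ring
  rw [this, Real.sqrt_mul (sq_nonneg t), Real.sqrt_sq_eq_abs]

lemma norm2_zero : norm2 (0 : Fin N → ℝ) = 0 := by
  unfold norm2; simp

end aux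

/-- under the assumptions on `φ` and the kernel assumption,
the objective `F` is coercive: for every `R` there is `r > 0` such that
`‖x‖₂ > r` implies `F(x) > R`. -/
theorem coercivity_of_objective {M N : ℕ} (hM : 0 < M) (hN : 0 < N)
    {ι : Type} [Fintype ι]
    (A : Matrix (Fin M) (Fin N) ℝ) (b : Fin M → ℝ) (G : ι → Fin N → ℝ)
    (β q : ℝ) (hβ : 0 < β) (hq : 1 ≤ q)
    (φ φ' : ℝ → ℝ) (hφ : PhiAssumption φ φ')
    (hker : ∀ x : Fin N → ℝ, A.mulVec x = 0 → (∀ i : ι, dotp (G i) x = 0) → x = 0) :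
    ∀ R : ℝ, ∃ r > (0 : ℝ), ∀ x : Fin N → ℝ,
      norm2 x > r → objF φ A b G β q x > R := by
  intro R
  have hq0 : (0:ℝ) < q := lt_of_lt_of_le one_pos hq
  have hβq : (0:ℝ) < β / q := div_pos hβ hq0
  -- the sphere and the minimum of gfun on it
  set S : Set (Fin N → ℝ) := {x | norm2 x = 1} with hS
  have hSclosed : IsClosed S := by
    have : S = (fun x : Fin N → ℝ => norm2 x) ⁻¹' {1} := rfl
    rw [this]; exact isClosed_singleton.preimage norm2_cont
  have hSbdd : Bornology.IsBounded S := by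
    apply Bornology.IsBounded.subset (Metric.isBounded_closedBall (x := (0 : Fin N → ℝ)) (r := 1))
    intro x hx
    rw [Metric.mem_closedBall, dist_zero_right]
    rw [pi_norm_le_iff_of_nonneg zero_le_one]
    intro l
    rw [Real.norm_eq_abs]
    calc |x l| ≤ norm2 x := abs_le_norm2 x l
    _ = 1 := hx
  have hScompact : IsCompact S := Metric.isCompact_of_isClosed_isBounded hSclosed hSbdd
  have hSne : S.Nonempty := by
    refine ⟨fun l => if l = (⟨0, hN⟩ : Fin N) then 1 else 0, ?_⟩
    show norm2 _ = 1
    unfold norm2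
    have : ∑ l, ((fun l => if l = (⟨0, hN⟩ : Fin N) then (1:ℝ) else 0) l) ^ 2 = 1 := by
      rw [Finset.sum_eq_single (⟨0, hN⟩ : Fin N)]
      · simp
      · intro m _ hm; simp [hm]
      · simp
    rw [this, Real.sqrt_one]
  obtain ⟨x₀, hx₀S, hmin⟩ := hScompact.exists_isMinOn hSne (gfun_cont A G).continuousOn
  set c : ℝ := gfun A G x₀ with hc
  have hcpos : 0 < c := by
    rcases lt_or_eq_of_le (gfun_nonneg A G x₀) with h | h
    · exact h
    · exfalso
      have h0 : gfun A G x₀ = 0 := h.symm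
      unfold gfun at h0
      have h1 : (∑ l, |A.mulVec x₀ l|) = 0 ∧ (∑ i, |dotp (G i) x₀|) = 0 := by
        constructor
        · linarith [Finset.sum_nonneg (fun l (_ : l ∈ Finset.univ) => abs_nonneg (A.mulVec x₀ l)),
            Finset.sum_nonneg (fun i (_ : i ∈ Finset.univ) => abs_nonneg (dotp (G i) x₀))]
        · linarith [Finset.sum_nonneg (fun l (_ : l ∈ Finset.univ) => abs_nonneg (A.mulVec x₀ l)),
            Finset.sum_nonneg (fun i (_ : i ∈ Finset.univ) => abs_nonneg (dotp (G i) x₀))]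
      have hA0 : A.mulVec x₀ = 0 := by
        funext l
        have := (Finset.sum_eq_zero_iff_of_nonneg
          (fun m (_ : m ∈ Finset.univ) => abs_nonneg (A.mulVec x₀ m))).mp h1.1 l (Finset.mem_univ l)
        simpa [abs_eq_zero] using this
      have hG0 : ∀ i, dotp (G i) x₀ = 0 := by
        intro i
        have := (Finset.sum_eq_zero_iff_of_nonneg
          (fun j (_ : j ∈ Finset.univ) => abs_nonneg (dotp (G j) x₀))).mp h1.2 i (Finset.mem_univ i)
        simpa [abs_eq_zero] using this
      have := hker x₀ hA0 hG0
      rw [this] at hx₀S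
      simp only [hS, Set.mem_setOf_eq, norm2_zero] at hx₀S
      exact zero_ne_one hx₀S
  -- lower bound gfun x ≥ c * norm2 x (for norm2 x > 0)
  have hglb : ∀ x : Fin N → ℝ, 0 < norm2 x → c * norm2 x ≤ gfun A G x := by
    intro x hx
    set t := norm2 x with ht
    set u := t⁻¹ • x with hu
    have htne : t ≠ 0 := ne_of_gt hx
    have huS : u ∈ S := by
      show norm2 u = 1
      rw [hu, norm2_smul, abs_of_pos (inv_pos.mpr hx), ← ht, inv_mul_cancel₀ htne]
    have hxu : x = t • u := by
      rw [hu, smul_smul, mul_inv_cancel₀ htne, one_smul]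
    have := hmin huS
    calc c * t ≤ gfun A G u * t := by
          exact mul_le_mul_of_nonneg_right this (le_of_lt hx)
    _ = t * gfun A G u := mul_comm _ _
    _ = gfun A G (t • u) := (gfun_smul A G t (le_of_lt hx) u).symm
    _ = gfun A G x := by rw [← hxu]
  -- thresholds
  obtain ⟨T, hT⟩ := (hφ.coercive.eventually_gt_atTop R).exists_forall_of_atTop
  set B : ℝ := ∑ m, |b m| with hB
  have hBnn : 0 ≤ B := Finset.sum_nonneg fun _ _ => abs_nonneg _
  set D : ℝ := max (q * (|R| + 1) / β) 1 with hD
  have hD1 : (1:ℝ) ≤ D := le_max_right _ _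
  have hD0 : (0:ℝ) ≤ D := le_trans zero_le_one hD1
  have hDq : R < (β / q) * D ^ q := by
    have h1 : D ≤ D ^ q := by
      calc D = D ^ (1:ℝ) := (Real.rpow_one D).symm
      _ ≤ D ^ q := Real.rpow_le_rpow_of_exponent_le hD1 hq
    have h2 : q * (|R| + 1) / β ≤ D := le_max_left _ _
    have h3 : (β / q) * (q * (|R| + 1) / β) = |R| + 1 := by
      field_simp
    have h4 : |R| + 1 ≤ (β / q) * D := by
      rw [← h3]; exact mul_le_mul_of_nonneg_left h2 (le_of_lt hβq)
    have h5 : (β / q) * D ≤ (β / q) * D ^ q := mul_le_mul_of_nonneg_left h1 (le_of_lt hβq)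
    have h6 : R < |R| + 1 := lt_of_le_of_lt (le_abs_self R) (by linarith)
    linarith
  set K : ℝ := max (max T (B + D)) 1 with hK
  have hK1 : (1:ℝ) ≤ K := le_max_right _ _
  have hKT : T ≤ K := le_trans (le_max_left _ _) (le_max_left _ _)
  have hKBD : B + D ≤ K := le_trans (le_max_right _ _) (le_max_left _ _)
  set n : ℝ := (M : ℝ) + (Fintype.card ι : ℝ) with hn
  have hn1 : (1:ℝ) ≤ n := by
    have : (1:ℝ) ≤ (M:ℝ) := by exact_mod_cast hM
    have : (0:ℝ) ≤ (Fintype.card ι : ℝ) := Nat.cast_nonneg _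
    linarith
  refine ⟨2 * n * K / c, by positivity, fun x hx => ?_⟩
  have hxn : 0 < norm2 x := lt_trans (by positivity) hx
  have hgx : 2 * n * K < gfun A G x := by
    have h1 : c * (2 * n * K / c) = 2 * n * K := by field_simp
    calc 2 * n * K = c * (2 * n * K / c) := h1.symm
    _ < c * norm2 x := by exact mul_lt_mul_of_pos_left hx hcpos
    _ ≤ gfun A G x := hglb x hxn
  -- nonnegativity of the two parts of objF
  have hphiterm : ∀ i : ι, 0 ≤ φ |dotp (G i) x| := fun i => hφ.nonneg _ (abs_nonneg _)
  have hpensum_nn : 0 ≤ (β / q) * ∑ l, |A.mulVec x l - b l| ^ q := by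
    apply mul_nonneg (le_of_lt hβq)
    exact Finset.sum_nonneg fun l _ => Real.rpow_nonneg (abs_nonneg _) q
  have hphisum_nn : 0 ≤ ∑ i : ι, φ |dotp (G i) x| :=
    Finset.sum_nonneg fun i _ => hphiterm i
  -- case split
  have hcases : (∑ l, |A.mulVec x l|) > n * K ∨ (∑ i, |dotp (G i) x|) > n * K := by
    by_contra h
    push_neg at h
    have := hgx
    unfold gfun at this
    linarith [h.1, h.2]
  rcases hcases with hA | hG
  · -- some coordinate of A x is large
    have hexl : ∃ l : Fin M, K < |A.mulVec x l| := by
      by_contra h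
      push_neg at h
      have : (∑ l, |A.mulVec x l|) ≤ (M:ℝ) * K := by
        calc (∑ l, |A.mulVec x l|) ≤ ∑ _l : Fin M, K := Finset.sum_le_sum fun l _ => h l
        _ = (M:ℝ) * K := by rw [Finset.sum_const]; simp [mul_comm]
      have hMn : (M:ℝ) * K ≤ n * K := by
        apply mul_le_mul_of_nonneg_right _ (le_trans zero_le_one hK1)
        rw [hn]; linarith [Nat.cast_nonneg (α := ℝ) (Fintype.card ι)]
      linarith
    obtain ⟨l, hl⟩ := hexl
    have hbig : D ≤ |A.mulVec x l - b l| := by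
      have h1 : |b l| ≤ B := Finset.single_le_sum (f := fun m => |b m|)
        (fun m _ => abs_nonneg _) (Finset.mem_univ l)
      have h2 : |A.mulVec x l| - |b l| ≤ |A.mulVec x l - b l| := abs_sub_abs_le_abs_sub _ _
      linarith
    have hterm : D ^ q ≤ |A.mulVec x l - b l| ^ q :=
      Real.rpow_le_rpow hD0 hbig (le_of_lt hq0)
    have hsum : D ^ q ≤ ∑ m, |A.mulVec x m - b m| ^ q := by
      calc D ^ q ≤ |A.mulVec x l - b l| ^ q := hterm
      _ ≤ ∑ m, |A.mulVec x m - b m| ^ q := Finset.single_le_sum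
          (f := fun m => |A.mulVec x m - b m| ^ q)
          (fun m _ => Real.rpow_nonneg (abs_nonneg _) q) (Finset.mem_univ l)
    have : (β / q) * D ^ q ≤ (β / q) * ∑ m, |A.mulVec x m - b m| ^ q :=
      mul_le_mul_of_nonneg_left hsum (le_of_lt hβq)
    unfold objF
    linarith
  · -- some dotp is large
    have hexi : ∃ i : ι, K < |dotp (G i) x| := by
      by_contra h
      push_neg at h
      have : (∑ i, |dotp (G i) x|) ≤ (Fintype.card ι : ℝ) * K := by
        calc (∑ i, |dotp (G i) x|) ≤ ∑ _i : ι, K := Finset.sum_le_sum fun i _ => h i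
        _ = (Fintype.card ι : ℝ) * K := by rw [Finset.sum_const]; simp [mul_comm]
      have hMn : (Fintype.card ι : ℝ) * K ≤ n * K := by
        apply mul_le_mul_of_nonneg_right _ (le_trans zero_le_one hK1)
        rw [hn]; linarith [Nat.cast_nonneg (α := ℝ) M]
      linarith
    obtain ⟨i, hi⟩ := hexi
    have hφi : R < φ |dotp (G i) x| := hT _ (le_trans hKT (le_of_lt hi))
    have hsum : φ |dotp (G i) x| ≤ ∑ j : ι, φ |dotp (G j) x| :=
      Finset.single_le_sum (f := fun j => φ |dotp (G j) x|)
        (fun j _ => hphiterm j) (Finset.mem_univ i)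
    unfold objF
    linarith
end

section
/- Suppose φ satisfies the stated assumption and the kernel assumption holds. Then the minimization problem min_{x ∈ ℝ^N} F(x) has at least one solution, i.e., there exists x* ∈ ℝ^N with F(x*) ≤ F(x) for all x ∈ ℝ^N. -/
open Filter Matrix

theorem tendsto_sum_apply_cocompact_atTop {κ X : Type*} [Fintype κ] [TopologicalSpace X]
    {ψ : κ → X → ℝ} (hψ_nonneg : ∀ k t, 0 ≤ ψ k t)
    (hψ : ∀ k, Tendsto (ψ k) (cocompact X) atTop) :
    Tendsto (fun y : κ → X => ∑ k, ψ k (y k)) (cocompact (κ → X)) atTop := by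
  rw [← coprodᵢ_cocompact, Filter.coprodᵢ, tendsto_iSup]
  intro k
  refine tendsto_atTop_mono (fun y => ?_) ((hψ k).comp tendsto_comap)
  exact Finset.single_le_sum (fun j _ => hψ_nonneg j (y j)) (Finset.mem_univ k)

theorem Matrix.tendsto_mulVec_cocompact {m n : Type*} [Fintype n] {W : Matrix m n ℝ}
    (hW : ∀ x, W *ᵥ x = 0 → x = 0) :
    Tendsto W.mulVec (cocompact (n → ℝ)) (cocompact (m → ℝ)) :=
  (LinearMap.isClosedEmbedding_of_injective (f := W.mulVecLin)
    (LinearMap.ker_eq_bot'.mpr hW)).tendsto_cocompact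

theorem Matrix.exists_forall_sum_apply_mulVec_le {m n : Type*} [Fintype m] [Fintype n]
    {W : Matrix m n ℝ} (hW : ∀ x, W *ᵥ x = 0 → x = 0) {ψ : m → ℝ → ℝ}
    (hψ_cont : ∀ k, Continuous (ψ k)) (hψ_nonneg : ∀ k t, 0 ≤ ψ k t)
    (hψ : ∀ k, Tendsto (ψ k) (cocompact ℝ) atTop) :
    ∃ x₀ : n → ℝ, ∀ x, ∑ k, ψ k ((W *ᵥ x₀) k) ≤ ∑ k, ψ k ((W *ᵥ x) k) := by
  have hcont : Continuous fun x : n → ℝ => ∑ k, ψ k ((W *ᵥ x) k) :=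
    continuous_finsetSum _ fun k _ =>
      (hψ_cont k).comp ((continuous_apply k).comp (continuous_const.matrix_mulVec continuous_id))
  exact hcont.exists_forall_le
    ((tendsto_sum_apply_cocompact_atTop hψ_nonneg hψ).comp (tendsto_mulVec_cocompact hW))

theorem tendsto_abs_sub_rpow_cocompact_atTop {q : ℝ} (hq : 0 < q) (b : ℝ) :
    Tendsto (fun t : ℝ => |t - b| ^ q) (cocompact ℝ) atTop :=
  (tendsto_rpow_atTop hq).comp <|
    tendsto_norm_cocompact_atTop.comp (Homeomorph.subRight b).isClosedEmbedding.tendsto_cocompact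

theorem PhiAssumption.tendsto_comp_abs_cocompact {φ φ' : ℝ → ℝ} (hφ : PhiAssumption φ φ') :
    Tendsto (fun t => φ |t|) (cocompact ℝ) atTop :=
  hφ.coercive.comp tendsto_norm_cocompact_atTop

/-- The term of `F(x)` contributed by row `k` of the stacked matrix `[G; A]`, as a function of
`t = (G_i)ᵀ x` resp. `t = (A x)_l`. -/
noncomputable def objSummand {M : ℕ} {ι : Type} (φ : ℝ → ℝ) (b : Fin M → ℝ) (β q : ℝ) :
    ι ⊕ Fin M → ℝ → ℝ :=
  Sum.elim (fun _ t => φ |t|) (fun l t => β / q * |t - b l| ^ q)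

section objSummand

variable {M : ℕ} {ι : Type} {φ φ' : ℝ → ℝ} (b : Fin M → ℝ) {β q : ℝ}

theorem objF_eq_sum_objSummand [Fintype ι] {N : ℕ} (A : Matrix (Fin M) (Fin N) ℝ)
    (G : ι → Fin N → ℝ) (x : Fin N → ℝ) :
    objF φ A b G β q x = ∑ k, objSummand φ b β q k ((fromRows (of G) A *ᵥ x) k) := by
  simp only [objF, objSummand, fromRows_mulVec, Fintype.sum_sum_type, Sum.elim_inl,
    Sum.elim_inr, Finset.mul_sum]
  rfl

theorem continuous_objSummand (hφ : PhiAssumption φ φ') (hq : 0 < q) (k : ι ⊕ Fin M) :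
    Continuous (objSummand φ b β q k) := by
  rcases k with i | l
  · exact hφ.cont.comp_continuous continuous_abs abs_nonneg
  · exact continuous_const.mul ((continuous_abs.comp (continuous_sub_right _)).rpow_const
      fun _ => Or.inr hq.le)

theorem objSummand_nonneg (hφ : PhiAssumption φ φ') (hq : 0 < q) (hβ : 0 < β) (k : ι ⊕ Fin M)
    (t : ℝ) : 0 ≤ objSummand φ b β q k t := by
  rcases k with i | l
  · exact hφ.nonneg _ (abs_nonneg t)
  · exact mul_nonneg (div_pos hβ hq).le (Real.rpow_nonneg (abs_nonneg _) q)

theorem tendsto_objSummand_cocompact_atTop (hφ : PhiAssumption φ φ') (hq : 0 < q) (hβ : 0 < β)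
    (k : ι ⊕ Fin M) :
    Tendsto (objSummand φ b β q k) (cocompact ℝ) atTop := by
  rcases k with i | l
  · exact hφ.tendsto_comp_abs_cocompact
  · exact (tendsto_abs_sub_rpow_cocompact_atTop hq (b l)).const_mul_atTop (div_pos hβ hq)

end objSummand

theorem existence_of_minimizer_general {M N : ℕ}
    {ι : Type} [Fintype ι]
    (A : Matrix (Fin M) (Fin N) ℝ) (b : Fin M → ℝ) (G : ι → Fin N → ℝ)
    (β q : ℝ) (hβ : 0 < β) (hq : 1 ≤ q)
    (φ φ' : ℝ → ℝ) (hφ : PhiAssumption φ φ')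
    (hker : ∀ x : Fin N → ℝ, A.mulVec x = 0 → (∀ i : ι, dotp (G i) x = 0) → x = 0) :
    ∃ xstar : Fin N → ℝ, ∀ x : Fin N → ℝ,
      objF φ A b G β q xstar ≤ objF φ A b G β q x := by
  have hq₀ : 0 < q := one_pos.trans_le hq
  have hW : ∀ x, fromRows (of G) A *ᵥ x = 0 → x = 0 := fun x hx =>
    hker x (funext fun l => congrFun hx (.inr l)) fun i => congrFun hx (.inl i)
  obtain ⟨x₀, hx₀⟩ := exists_forall_sum_apply_mulVec_le hW
    (continuous_objSummand b hφ hq₀) (objSummand_nonneg b hφ hq₀ hβ)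
    (tendsto_objSummand_cocompact_atTop b hφ hq₀ hβ)
  exact ⟨x₀, fun x => by simpa only [objF_eq_sum_objSummand] using hx₀ x⟩

/-- under the assumptions on `φ` and the kernel assumption,
the minimization problem `min_x F(x)` has at least one solution. -/
theorem existence_of_minimizer {M N : ℕ} (hM : 0 < M) (hN : 0 < N)
    {ι : Type} [Fintype ι]
    (A : Matrix (Fin M) (Fin N) ℝ) (b : Fin M → ℝ) (G : ι → Fin N → ℝ)
    (β q : ℝ) (hβ : 0 < β) (hq : 1 ≤ q)
    (φ φ' : ℝ → ℝ) (hφ : PhiAssumption φ φ')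
    (hker : ∀ x : Fin N → ℝ, A.mulVec x = 0 → (∀ i : ι, dotp (G i) x = 0) → x = 0) :
    ∃ xstar : Fin N → ℝ, ∀ x : Fin N → ℝ,
      objF φ A b G β q xstar ≤ objF φ A b G β q x :=
  existence_of_minimizer_general A b G β q hβ hq φ φ' hφ hker
end

section
/- Suppose φ satisfies the stated assumption and in addition: φ is twice continuously differentiable on (0,∞), φ'' is increasing on (0,∞) with φ''(t) ≤ 0 for every t > 0, φ''(t) → −∞ as t → 0⁺, and φ''(t) → 0 as t → +∞. Then there exists a constant θ₂ > 0 (depending only on A, b, β, φ and the vectors G_i, but not on the minimizer) such that for every local minimizer x* of F with q = 2 and every i ∈ J, either G_iᵀ x* = 0 or |G_iᵀ x*| ≥ θ₂. -/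
/-- The objective function with quadratic fidelity (`q = 2`):
`F(x) = Σ_{i∈J} φ(|G_iᵀ x|) + (β/2) ‖Ax − b‖₂²`. -/
noncomputable def objF2 {M N : ℕ} {ι : Type} [Fintype ι] (φ : ℝ → ℝ)
    (A : Matrix (Fin M) (Fin N) ℝ) (b : Fin M → ℝ) (G : ι → Fin N → ℝ)
    (β : ℝ) (x : Fin N → ℝ) : ℝ :=
  (∑ i : ι, φ |dotp (G i) x|) + (β / 2) * ∑ l, (A.mulVec x l - b l) ^ 2

/-!
Let `c = G_iᵀ x* ≠ 0` and move `x*` along a direction `u` with `G_jᵀ u = 0` whenever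
`G_jᵀ x* = 0`, but `G_iᵀ u ≠ 0`. For small `s` the nonzero `G_jᵀ x*` keep their sign, so by
concavity every `j ≠ i` contributes a nonpositive second difference to
`F(x* + s u) + F(x* - s u) - 2 F(x*) ≥ 0`, while the fidelity term contributes `β s² ‖A u‖²`.
The `i`-th second difference is at most `φ''(|c| + s |G_iᵀ u|) s² (G_iᵀ u)²`, so `φ''` is at
least `-β ‖A u‖² / (G_iᵀ u)²` just above `|c|`. Choosing `u` from one fixed direction per pair
(zero set of `x*`, `i`) makes this bound uniform, and `φ'' → -∞` at `0⁺` keeps `|c|` away from `0`.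
-/

open Set Filter Topology Matrix

lemma second_difference_le {f f' f'' : ℝ → ℝ} {a h K : ℝ} (hh : 0 ≤ h)
    (hf : ∀ t ∈ Icc (a - h) (a + h), HasDerivAt f (f' t) t)
    (hf' : ∀ t ∈ Ioo (a - h) (a + h), HasDerivAt f' (f'' t) t)
    (hK : ∀ t ∈ Ioo (a - h) (a + h), f'' t ≤ K) :
    f (a + h) + f (a - h) - 2 * f a ≤ K * h ^ 2 := by
  set g : ℝ → ℝ := fun r => K * r ^ 2 - (f (a + r) + f (a - r))
  have hg : ∀ r ∈ Icc 0 h, HasDerivAt g (2 * K * r - (f' (a + r) - f' (a - r))) r := by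
    intro r hr
    have hplus := (hf (a + r) ⟨by linarith [hr.1], by linarith [hr.2]⟩).comp_const_add a r
    have hminus := (hf (a - r) ⟨by linarith [hr.2], by linarith [hr.1]⟩).comp_const_sub a r
    refine (((hasDerivAt_pow 2 r).const_mul K).sub (hplus.add hminus)).congr_deriv ?_
    push_cast; ring
  have hslope : ∀ r ∈ Ioo 0 h, f' (a + r) - f' (a - r) ≤ 2 * K * r := by
    intro r hr
    have hsub : Icc (a - r) (a + r) ⊆ Ioo (a - h) (a + h) :=
      Icc_subset_Ioo (by linarith [hr.2]) (by linarith [hr.2])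
    obtain ⟨ξ, hξ, hξslope⟩ := exists_hasDerivAt_eq_slope f' f''
      (by linarith [hr.1] : a - r < a + r)
      (fun t ht => (hf' t (hsub ht)).continuousAt.continuousWithinAt)
      (fun t ht => hf' t (hsub (Ioo_subset_Icc_self ht)))
    have := hK ξ (hsub (Ioo_subset_Icc_self hξ))
    rw [hξslope, div_le_iff₀ (by linarith [hr.1])] at this
    linarith
  have hmono : MonotoneOn g (Icc 0 h) := by
    refine monotoneOn_of_hasDerivWithinAt_nonneg (convex_Icc 0 h)
      (fun r hr => (hg r hr).continuousAt.continuousWithinAt)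
      (fun r hr => (hg r (interior_subset hr)).hasDerivWithinAt) fun r hr => ?_
    rw [interior_Icc] at hr
    linarith [hslope r hr]
  have := hmono (left_mem_Icc.2 hh) (right_mem_Icc.2 hh) hh
  simp only [g, add_zero, sub_zero] at this
  linarith

lemma apply_abs_add_add_apply_abs_sub (φ : ℝ → ℝ) {c e : ℝ} (he : |e| ≤ |c|) :
    φ |c + e| + φ |c - e| = φ (|c| + |e|) + φ (|c| - |e|) := by
  have : (|c + e| = |c| + |e| ∧ |c - e| = |c| - |e|) ∨
      (|c + e| = |c| - |e| ∧ |c - e| = |c| + |e|) := by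
    rcases abs_cases c with ⟨hc, _⟩ | ⟨hc, _⟩ <;> rcases abs_cases e with ⟨he', _⟩ | ⟨he', _⟩ <;>
      rw [hc, he'] at he ⊢ <;>
      rcases abs_cases (c + e) with ⟨h₁, _⟩ | ⟨h₁, _⟩ <;>
      rcases abs_cases (c - e) with ⟨h₂, _⟩ | ⟨h₂, _⟩ <;>
      rw [h₁, h₂] <;> first | (left; constructor <;> linarith) | (right; constructor <;> linarith)
  rcases this with ⟨h₁, h₂⟩ | ⟨h₁, h₂⟩ <;> rw [h₁, h₂]
  exact add_comm _ _

lemma ConcaveOn.add_add_sub_le_two_mul {φ : ℝ → ℝ} (hφ : ConcaveOn ℝ (Ici 0) φ) {a t : ℝ}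
    (ht : |t| ≤ a) : φ (a + t) + φ (a - t) ≤ 2 * φ a := by
  obtain ⟨h₁, h₂⟩ := abs_le.1 ht
  have := hφ.2 (x := a + t) (y := a - t) (mem_Ici.2 (by linarith))
    (mem_Ici.2 (by linarith)) (by norm_num : (0 : ℝ) ≤ 1 / 2)
    (by norm_num : (0 : ℝ) ≤ 1 / 2) (by norm_num)
  rw [smul_eq_mul, smul_eq_mul, smul_eq_mul, smul_eq_mul,
    show 1 / 2 * (a + t) + 1 / 2 * (a - t) = a by ring] at this
  linarith

lemma ConcaveOn.apply_abs_add_add_apply_abs_sub_le {φ : ℝ → ℝ} (hφ : ConcaveOn ℝ (Ici 0) φ)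
    {c e : ℝ} (he : |e| ≤ |c|) : φ |c + e| + φ |c - e| ≤ 2 * φ |c| := by
  rw [apply_abs_add_add_apply_abs_sub φ he]
  exact hφ.add_add_sub_le_two_mul (by rwa [abs_abs])

lemma tendsto_abs_mul_const_nhds_zero (d : ℝ) :
    Tendsto (fun s : ℝ => |s * d|) (𝓝 0) (𝓝 0) := by
  simpa using ((continuous_mul_const d).abs).tendsto 0

lemma eventually_abs_mul_le {c d : ℝ} (h : c = 0 → d = 0) :
    ∀ᶠ s in 𝓝 (0 : ℝ), |s * d| ≤ |c| := by
  rcases eq_or_ne c 0 with hc | hc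
  · simp [h hc]
  · filter_upwards [(tendsto_abs_mul_const_nhds_zero d).eventually_lt_const (abs_pos.2 hc)]
      with s hs using hs.le

lemma ConcaveOn.eventually_sum_le {ι : Type*} [Fintype ι] {φ : ℝ → ℝ}
    (hφ : ConcaveOn ℝ (Ici 0) φ) {c d : ι → ℝ} (hcd : ∀ j, c j = 0 → d j = 0) (i : ι) :
    ∀ᶠ s in 𝓝 (0 : ℝ), ∑ j, (φ |c j + s * d j| + φ |c j - s * d j| - 2 * φ |c j|) ≤
      φ |c i + s * d i| + φ |c i - s * d i| - 2 * φ |c i| := by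
  classical
  filter_upwards [eventually_all.2 fun j => eventually_abs_mul_le (hcd j)] with s hs
  rw [← Finset.add_sum_erase _ _ (Finset.mem_univ i), add_le_iff_nonpos_right]
  exact Finset.sum_nonpos fun j _ => sub_nonpos.2 (hφ.apply_abs_add_add_apply_abs_sub_le (hs j))

lemma abs_second_difference_le {φ φ' φ'' : ℝ → ℝ} (hφ : ∀ t, 0 < t → HasDerivAt φ (φ' t) t)
    (hφ' : ∀ t, 0 < t → HasDerivAt φ' (φ'' t) t) (hmono : MonotoneOn φ'' (Ioi 0))
    {c e : ℝ} (he : |e| < |c|) :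
    φ |c + e| + φ |c - e| - 2 * φ |c| ≤ φ'' (|c| + |e|) * e ^ 2 := by
  have hpos : ∀ t ∈ Icc (|c| - |e|) (|c| + |e|), 0 < t := fun t ht => by linarith [ht.1]
  rw [apply_abs_add_add_apply_abs_sub φ he.le, ← sq_abs e]
  exact second_difference_le (abs_nonneg e) (fun t ht => hφ t (hpos t ht))
    (fun t ht => hφ' t (hpos t (Ioo_subset_Icc_self ht)))
    (fun t ht => hmono (hpos t (Ioo_subset_Icc_self ht))
      (show 0 < |c| + |e| by linarith [abs_nonneg e]) ht.2.le)

lemma dotp_eq_dotProduct {N : ℕ} (g x : Fin N → ℝ) : dotp g x = g ⬝ᵥ x := rfl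

lemma eventually_le_add_smul_of_forall_norm2_lt {N : ℕ} {f : (Fin N → ℝ) → ℝ}
    {xs : Fin N → ℝ} (hmin : ∃ ε > (0 : ℝ), ∀ x, norm2 (x - xs) < ε → f xs ≤ f x)
    (u : Fin N → ℝ) : ∀ᶠ s in 𝓝 (0 : ℝ), f xs ≤ f (xs + s • u) := by
  obtain ⟨ε, hε, hmin⟩ := hmin
  have hcont : Continuous fun s : ℝ => norm2 (s • u) := by unfold norm2; fun_prop
  have hlim : Tendsto (fun s : ℝ => norm2 (s • u)) (𝓝 0) (𝓝 0) := by
    simpa [norm2] using hcont.tendsto 0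
  filter_upwards [hlim.eventually_lt_const hε] with s hs
  exact hmin _ (by rwa [add_sub_cancel_left])

lemma sum_sq_add_add_sum_sq_sub {κ : Type*} (t : Finset κ) (r v : κ → ℝ) (s : ℝ) :
    ∑ l ∈ t, (r l + s * v l) ^ 2 + ∑ l ∈ t, (r l - s * v l) ^ 2 - 2 * ∑ l ∈ t, r l ^ 2 =
      2 * s ^ 2 * ∑ l ∈ t, v l ^ 2 := by
  rw [Finset.mul_sum, Finset.mul_sum, ← Finset.sum_add_distrib, ← Finset.sum_sub_distrib]
  exact Finset.sum_congr rfl fun _ _ => by ring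

lemma objF2_second_difference {M N : ℕ} {ι : Type} [Fintype ι] (φ : ℝ → ℝ)
    (A : Matrix (Fin M) (Fin N) ℝ) (b : Fin M → ℝ) (G : ι → Fin N → ℝ) (β : ℝ)
    (xs u : Fin N → ℝ) (s : ℝ) :
    objF2 φ A b G β (xs + s • u) + objF2 φ A b G β (xs - s • u) - 2 * objF2 φ A b G β xs =
      ∑ j, (φ |dotp (G j) xs + s * dotp (G j) u| + φ |dotp (G j) xs - s * dotp (G j) u|
        - 2 * φ |dotp (G j) xs|) + β * s ^ 2 * ∑ l, (A *ᵥ u) l ^ 2 := by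
  have hquad := sum_sq_add_add_sum_sq_sub Finset.univ (fun l => (A *ᵥ xs) l - b l) (A *ᵥ u) s
  simp only [objF2, dotp_eq_dotProduct, dotProduct_add, dotProduct_sub, dotProduct_smul,
    mulVec_add, mulVec_sub, mulVec_smul, Pi.add_apply, Pi.sub_apply, Pi.smul_apply, smul_eq_mul,
    Finset.sum_sub_distrib, Finset.sum_add_distrib, ← Finset.mul_sum] at hquad ⊢
  have e₁ : ∀ l, (A *ᵥ xs) l + s * (A *ᵥ u) l - b l = (A *ᵥ xs) l - b l + s * (A *ᵥ u) l :=
    fun l => by ring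
  have e₂ : ∀ l, (A *ᵥ xs) l - s * (A *ᵥ u) l - b l = (A *ᵥ xs) l - b l - s * (A *ᵥ u) l :=
    fun l => by ring
  simp only [e₁, e₂]
  linear_combination (β / 2) * hquad

lemma eventually_neg_le_second_difference_of_local_min {M N : ℕ} {ι : Type} [Fintype ι]
    {φ : ℝ → ℝ} {A : Matrix (Fin M) (Fin N) ℝ} {b : Fin M → ℝ} {G : ι → Fin N → ℝ} {β : ℝ}
    (hφ : ConcaveOn ℝ (Ici 0) φ) {xs : Fin N → ℝ}
    (hxs : ∃ ε > (0 : ℝ), ∀ x, norm2 (x - xs) < ε → objF2 φ A b G β xs ≤ objF2 φ A b G β x)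
    {u : Fin N → ℝ} (hu : ∀ j, dotp (G j) xs = 0 → dotp (G j) u = 0) (i : ι) :
    ∀ᶠ s in 𝓝 (0 : ℝ), -(β * s ^ 2 * ∑ l, (A *ᵥ u) l ^ 2) ≤
      φ |dotp (G i) xs + s * dotp (G i) u| + φ |dotp (G i) xs - s * dotp (G i) u|
        - 2 * φ |dotp (G i) xs| := by
  have hline := eventually_le_add_smul_of_forall_norm2_lt hxs
  filter_upwards [hline u, hline (-u), hφ.eventually_sum_le hu i] with s hplus hminus hsum
  rw [smul_neg, ← sub_eq_add_neg] at hminus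
  have := objF2_second_difference φ A b G β xs u s
  linarith

noncomputable def testDirection {N : ℕ} {ι : Type} (G : ι → Fin N → ℝ) (S : Set ι) (i : ι) :
    Fin N → ℝ :=
  Classical.epsilon fun u => (∀ j ∈ S, dotp (G j) u = 0) ∧ dotp (G i) u ≠ 0

lemma testDirection_spec {N : ℕ} {ι : Type} (G : ι → Fin N → ℝ) {S : Set ι} {i : ι}
    {x : Fin N → ℝ} (hS : ∀ j ∈ S, dotp (G j) x = 0) (hi : dotp (G i) x ≠ 0) :
    (∀ j ∈ S, dotp (G j) (testDirection G S i) = 0) ∧ dotp (G i) (testDirection G S i) ≠ 0 :=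
  Classical.epsilon_spec (p := fun u => (∀ j ∈ S, dotp (G j) u = 0) ∧ dotp (G i) u ≠ 0)
    ⟨x, hS, hi⟩

theorem lower_bound_l2_fidelity_general {M N : ℕ}
    {ι : Type} [Fintype ι]
    (A : Matrix (Fin M) (Fin N) ℝ) (b : Fin M → ℝ) (G : ι → Fin N → ℝ)
    (β : ℝ)
    (φ φ' φ'' : ℝ → ℝ) (hφ : PhiAssumption φ φ')
    (hφ''deriv : ∀ t : ℝ, 0 < t → HasDerivAt φ' (φ'' t) t)
    (hφ''mono : ∀ s t : ℝ, 0 < s → s ≤ t → φ'' s ≤ φ'' t)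
    (hφ''atZero : Filter.Tendsto φ'' (nhdsWithin 0 (Set.Ioi 0)) Filter.atBot) :
    ∃ θ₂ > (0 : ℝ), ∀ xs : Fin N → ℝ,
      (∃ ε > (0 : ℝ), ∀ x : Fin N → ℝ, norm2 (x - xs) < ε →
        objF2 φ A b G β xs ≤ objF2 φ A b G β x) →
      ∀ i : ι, dotp (G i) xs = 0 ∨ θ₂ ≤ |dotp (G i) xs| := by
  obtain ⟨C, hC⟩ := (finite_range fun p : Set ι × ι =>
    β * (∑ l, (A *ᵥ testDirection G p.1 p.2) l ^ 2) /
      dotp (G p.2) (testDirection G p.1 p.2) ^ 2).bddAbove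
  obtain ⟨δ, hδ, hφ''δ⟩ := mem_nhdsGT_iff_exists_Ioo_subset.1
    (hφ''atZero.eventually (eventually_lt_atBot (-C)))
  refine ⟨δ, hδ, fun xs hxs i => or_iff_not_imp_left.2 fun hci => not_lt.1 fun hlt => ?_⟩
  set S : Set ι := {j | dotp (G j) xs = 0}
  set v := testDirection G S i
  obtain ⟨hS, hdi⟩ := testDirection_spec G (S := S) (fun j hj => hj) hci
  have hCi : β * (∑ l, (A *ᵥ v) l ^ 2) ≤ C * dotp (G i) v ^ 2 :=
    (div_le_iff₀ (by positivity)).1 (hC (mem_range_self (S, i)))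
  have hlim := tendsto_abs_mul_const_nhds_zero (dotp (G i) v)
  have hsmall := (eventually_neg_le_second_difference_of_local_min hφ.concave hxs
    hS i).and ((hlim.eventually_lt_const (abs_pos.2 hci)).and
      (hlim.eventually_lt_const (sub_pos.2 hlt)))
  obtain ⟨s, hs, hmin, hsc, hsδ⟩ :=
    (eventually_mem_nhdsWithin.and (nhdsWithin_le_nhds hsmall)).exists (f := 𝓝[≠] 0)
  have hΔ := abs_second_difference_le hφ.hasDeriv hφ''deriv
    (fun s hs t _ hst => hφ''mono s t hs hst) hsc
  have hneg : φ'' (|dotp (G i) xs| + |s * dotp (G i) v|) < -C :=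
    hφ''δ ⟨by positivity, by linarith⟩
  have hpos : 0 < (s * dotp (G i) v) ^ 2 := sq_pos_of_ne_zero (mul_ne_zero hs hdi)
  linarith [mul_lt_mul_of_pos_right hneg hpos, mul_le_mul_of_nonneg_left hCi (sq_nonneg s)]

/-- lower bound theory for the `ℓ₂`-fidelity model. Under the
assumptions on `φ` together with the second-order assumptions on `φ''`, there
is a constant `θ₂ > 0`, independent of the minimizer, such that every local
minimizer `x*` of `F` (with `q = 2`) satisfies, for every `i ∈ J`, either
`G_iᵀ x* = 0` or `|G_iᵀ x*| ≥ θ₂`. -/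
theorem lower_bound_l2_fidelity {M N : ℕ} (hM : 0 < M) (hN : 0 < N)
    {ι : Type} [Fintype ι]
    (A : Matrix (Fin M) (Fin N) ℝ) (b : Fin M → ℝ) (G : ι → Fin N → ℝ)
    (β : ℝ) (hβ : 0 < β)
    (φ φ' φ'' : ℝ → ℝ) (hφ : PhiAssumption φ φ')
    (hφ''deriv : ∀ t : ℝ, 0 < t → HasDerivAt φ' (φ'' t) t)
    (hφ''cont : ContinuousOn φ'' (Set.Ioi 0))
    (hφ''mono : ∀ s t : ℝ, 0 < s → s ≤ t → φ'' s ≤ φ'' t)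
    (hφ''nonpos : ∀ t : ℝ, 0 < t → φ'' t ≤ 0)
    (hφ''atZero : Filter.Tendsto φ'' (nhdsWithin 0 (Set.Ioi 0)) Filter.atBot)
    (hφ''atTop : Filter.Tendsto φ'' Filter.atTop (nhds 0)) :
    ∃ θ₂ > (0 : ℝ), ∀ xs : Fin N → ℝ,
      (∃ ε > (0 : ℝ), ∀ x : Fin N → ℝ, norm2 (x - xs) < ε →
        objF2 φ A b G β xs ≤ objF2 φ A b G β x) →
      ∀ i : ι, dotp (G i) xs = 0 ∨ θ₂ ≤ |dotp (G i) xs| :=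
  lower_bound_l2_fidelity_general A b G β φ φ' φ'' hφ hφ''deriv hφ''mono hφ''atZero
end

section
/- Suppose φ satisfies the stated assumption. Then there exists a constant θ₁ > 0 (depending only on A, β, φ and the vectors G_i, but not on the minimizer) such that for every local minimizer x* of F with q = 1 and every i ∈ J, either G_iᵀ x* = 0 or |G_iᵀ x*| ≥ θ₁. (The paper proves this for all stationary points of F, a class which includes all local minimizers.) -/
/-- The objective function with `ℓ₁` fidelity (`q = 1`):
`F(x) = Σ_{i∈J} φ(|G_iᵀ x|) + β ‖Ax − b‖₁`. -/
noncomputable def objF1 {M N : ℕ} {ι : Type} [Fintype ι] (φ : ℝ → ℝ)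
    (A : Matrix (Fin M) (Fin N) ℝ) (b : Fin M → ℝ) (G : ι → Fin N → ℝ)
    (β : ℝ) (x : Fin N → ℝ) : ℝ :=
  (∑ i : ι, φ |dotp (G i) x|) + β * ∑ l, |A.mulVec x l - b l|

/-! Only finitely many sign patterns `j ↦ sign (G_jᵀ x)` occur, so fix one representative `w`
for each. If `x*` is a local minimizer and `w` has its sign pattern, then along `x* - s w` with
small `s > 0` every `|G_jᵀ x|` decreases (`|G_iᵀ x|` by exactly `s |G_iᵀ w|`), while the fidelity
grows by at most `s β ‖A w‖₁`. Comparing one-sided derivatives gives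
`φ'(|G_iᵀ x*|) |G_iᵀ w| ≤ β ‖A w‖₁`, and since `φ'(0⁺) = +∞` this keeps `|G_iᵀ x*|` away from `0`
uniformly over the finitely many representatives. -/

open Filter Topology Set
open scoped Matrix

lemma Set.exists_finite_forall_exists_apply_eq {α β : Type*} [Finite β] (f : α → β) :
    ∃ W : Set α, W.Finite ∧ ∀ x, ∃ w ∈ W, f w = f x :=
  ⟨range (rangeSplitting f), finite_range _,
    fun x => ⟨_, mem_range_self ⟨f x, mem_range_self x⟩, apply_rangeSplitting f _⟩⟩

theorem HasDerivAt.mul_le_of_eventually_sub_le {f : ℝ → ℝ} {f' a c K : ℝ}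
    (hf : HasDerivAt f f' a) (h : ∀ᶠ s in 𝓝[>] 0, f a - f (a - s * c) ≤ s * K) :
    f' * c ≤ K := by
  have hray : HasDerivAt (fun s => f (a - s * c)) (f' * -c) 0 := by
    have hlin : HasDerivAt (fun s : ℝ => a - s * c) (-c) 0 := by
      simpa using ((hasDerivAt_id (0 : ℝ)).mul_const c).const_sub a
    exact (by simpa using hf : HasDerivAt f f' (a - 0 * c)).comp 0 hlin
  have hslope : -K ≤ f' * -c := by
    refine ge_of_tendsto hray.tendsto_slope_zero_right ?_
    filter_upwards [h, self_mem_nhdsWithin] with s hs (hpos : 0 < s)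
    rw [smul_eq_mul, zero_add, zero_mul, sub_zero, le_inv_mul_iff₀ hpos]
    linarith
  linarith

lemma abs_sub_mul_eq_of_sign_eq {a c s : ℝ} (hsign : SignType.sign c = SignType.sign a)
    (hle : s * |c| ≤ |a|) : |a - s * c| = |a| - s * |c| := by
  rcases lt_trichotomy a 0 with ha | ha | ha
  · have hc : c < 0 := sign_eq_neg_one_iff.1 (hsign.trans (sign_eq_neg_one_iff.2 ha))
    rw [abs_of_neg ha, abs_of_neg hc] at *
    rw [abs_of_nonpos (by nlinarith)]
    ring
  · have hc : c = 0 := sign_eq_zero_iff.1 (by rw [hsign, ha, sign_zero])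
    simp [ha, hc]
  · have hc : 0 < c := sign_eq_one_iff.1 (hsign.trans (sign_eq_one_iff.2 ha))
    rw [abs_of_pos ha, abs_of_pos hc] at *
    rw [abs_of_nonneg (by nlinarith)]

lemma eventually_abs_sub_mul_eq_of_sign_eq {a c : ℝ}
    (hsign : SignType.sign c = SignType.sign a) :
    ∀ᶠ s in 𝓝 0, |a - s * c| = |a| - s * |c| := by
  have hsmall : ∀ᶠ s in 𝓝 (0 : ℝ), s * |c| ≤ |a| := by
    rcases eq_or_ne a 0 with ha | ha
    · have hc : c = 0 := sign_eq_zero_iff.1 (by rw [hsign, ha, sign_zero])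
      simp [ha, hc]
    · have hlim : Tendsto (fun s : ℝ => s * |c|) (𝓝 0) (𝓝 0) := by
        have hcont : Continuous fun s : ℝ => s * |c| := by fun_prop
        simpa using hcont.tendsto 0
      exact (hlim.eventually (gt_mem_nhds (abs_pos.2 ha))).mono fun _ hs => hs.le
  exact hsmall.mono fun _ => abs_sub_mul_eq_of_sign_eq hsign

lemma dotp_sub_smul {N : ℕ} (g x w : Fin N → ℝ) (s : ℝ) :
    dotp g (x - s • w) = dotp g x - s * dotp g w := by
  simp only [dotp, Pi.sub_apply, Pi.smul_apply, smul_eq_mul, Finset.mul_sum,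
    ← Finset.sum_sub_distrib]
  exact Finset.sum_congr rfl fun l _ => by ring

lemma continuous_norm2 {N : ℕ} : Continuous (norm2 : (Fin N → ℝ) → ℝ) := by
  unfold norm2
  fun_prop

lemma isLocalMin_of_forall_norm2_sub_lt {N : ℕ} {F : (Fin N → ℝ) → ℝ} {xs : Fin N → ℝ}
    {ε : ℝ} (hε : 0 < ε) (h : ∀ x, norm2 (x - xs) < ε → F xs ≤ F x) : IsLocalMin F xs := by
  have hball : IsOpen {x | norm2 (x - xs) < ε} :=
    isOpen_lt (continuous_norm2.comp (continuous_id.sub continuous_const)) continuous_const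
  exact Filter.mem_of_superset (hball.mem_nhds (by simpa [norm2] using hε)) h

lemma sum_abs_mulVec_sub_smul_sub_le {M N : ℕ} (A : Matrix (Fin M) (Fin N) ℝ)
    (b : Fin M → ℝ) (x w : Fin N → ℝ) (s : ℝ) :
    ∑ l, |(A *ᵥ (x - s • w)) l - b l| ≤ ∑ l, |(A *ᵥ x) l - b l| + |s| * ∑ l, |(A *ᵥ w) l| := by
  rw [Finset.mul_sum, ← Finset.sum_add_distrib]
  refine Finset.sum_le_sum fun l _ => ?_
  rw [Matrix.mulVec_sub, Matrix.mulVec_smul, Pi.sub_apply, Pi.smul_apply, smul_eq_mul,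
    ← abs_mul, sub_right_comm]
  exact abs_sub _ _

theorem PhiAssumption.monotoneOn {φ φ' : ℝ → ℝ} (hφ : PhiAssumption φ φ') :
    MonotoneOn φ (Ici 0) := by
  refine monotoneOn_of_hasDerivWithinAt_nonneg (convex_Ici 0) hφ.cont (f' := φ') ?_ ?_ <;>
    rw [interior_Ici] <;> intro t ht
  · exact (hφ.hasDeriv t ht).hasDerivWithinAt
  · exact (hφ.derivPos t ht).le

lemma sub_le_sum_sub_of_monotoneOn {ι : Type*} [Fintype ι] {φ : ℝ → ℝ}
    (hφ : MonotoneOn φ (Ici 0)) {u v : ι → ℝ} (hv : ∀ j, 0 ≤ v j) (hvu : ∀ j, v j ≤ u j)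
    (i : ι) : φ (u i) - φ (v i) ≤ ∑ j, φ (u j) - ∑ j, φ (v j) := by
  rw [← Finset.sum_sub_distrib]
  exact Finset.single_le_sum (fun j _ => sub_nonneg.2 (hφ (hv j) ((hv j).trans (hvu j)) (hvu j)))
    (Finset.mem_univ i)

theorem deriv_mul_abs_dotp_le_of_isLocalMin {M N : ℕ} {ι : Type} [Fintype ι]
    {A : Matrix (Fin M) (Fin N) ℝ} {b : Fin M → ℝ} {G : ι → Fin N → ℝ} {β : ℝ} (hβ : 0 ≤ β)
    {φ : ℝ → ℝ} {d : ℝ} (hφ : MonotoneOn φ (Ici 0)) {xs w : Fin N → ℝ} {i : ι}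
    (hd : HasDerivAt φ d |dotp (G i) xs|) (hmin : IsLocalMin (objF1 φ A b G β) xs)
    (hsign : ∀ j, SignType.sign (dotp (G j) w) = SignType.sign (dotp (G j) xs)) :
    d * |dotp (G i) w| ≤ β * ∑ l, |(A *ᵥ w) l| := by
  refine hd.mul_le_of_eventually_sub_le ?_
  have hray : Tendsto (fun s : ℝ => xs - s • w) (𝓝[>] 0) (𝓝 xs) := by
    have hcont : Continuous fun s : ℝ => xs - s • w := by fun_prop
    simpa using tendsto_nhdsWithin_of_tendsto_nhds (hcont.tendsto 0)
  filter_upwards [hray.eventually hmin, self_mem_nhdsWithin,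
    eventually_all.2 fun j => nhdsWithin_le_nhds (eventually_abs_sub_mul_eq_of_sign_eq (hsign j))]
    with s hF (hpos : 0 < s) habs
  have hreg := sub_le_sum_sub_of_monotoneOn hφ (v := fun j => |dotp (G j) xs| - s * |dotp (G j) w|)
    (fun j => habs j ▸ abs_nonneg _)
    (fun j => sub_le_self _ (mul_nonneg hpos.le (abs_nonneg _))) i
  have hfid := sum_abs_mulVec_sub_smul_sub_le A b xs w s
  simp only [objF1, dotp_sub_smul, habs] at hF
  rw [abs_of_pos hpos] at hfid
  nlinarith

theorem lower_bound_l1_fidelity_general {M N : ℕ}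
    {ι : Type} [Fintype ι]
    (A : Matrix (Fin M) (Fin N) ℝ) (b : Fin M → ℝ) (G : ι → Fin N → ℝ)
    (β : ℝ) (hβ : 0 < β)
    (φ φ' : ℝ → ℝ) (hφ : PhiAssumption φ φ') :
    ∃ θ₁ > (0 : ℝ), ∀ xs : Fin N → ℝ,
      (∃ ε > (0 : ℝ), ∀ x : Fin N → ℝ, norm2 (x - xs) < ε →
        objF1 φ A b G β xs ≤ objF1 φ A b G β x) →
      ∀ i : ι, dotp (G i) xs = 0 ∨ θ₁ ≤ |dotp (G i) xs| := by
  obtain ⟨W, hWfin, hW⟩ := Set.exists_finite_forall_exists_apply_eq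
    fun (x : Fin N → ℝ) (j : ι) => SignType.sign (dotp (G j) x)
  obtain ⟨C, hC⟩ := ((hWfin.prod finite_univ).image fun p : (Fin N → ℝ) × ι =>
    (β * ∑ l, |(A *ᵥ p.1) l|) / |dotp (G p.2) p.1|).bddAbove
  obtain ⟨θ₁, hθ₁, hφ'C⟩ := mem_nhdsGT_iff_exists_Ioo_subset.1
    (hφ.derivAtZero.eventually (eventually_gt_atTop C))
  refine ⟨θ₁, hθ₁, fun xs ⟨ε, hε, hmin⟩ i => or_iff_not_imp_left.2 fun hi => ?_⟩
  by_contra! hsmall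
  obtain ⟨w, hwW, hsign⟩ := hW xs
  have hwi : 0 < |dotp (G i) w| := abs_pos.2 fun hw =>
    hi (sign_eq_zero_iff.1 (by rw [← congrFun hsign i, hw, sign_zero]))
  have hderiv := deriv_mul_abs_dotp_le_of_isLocalMin hβ.le hφ.monotoneOn
    (hφ.hasDeriv _ (abs_pos.2 hi)) (isLocalMin_of_forall_norm2_sub_lt hε hmin) (congrFun hsign)
  have hbound := (div_le_iff₀ hwi).1 (hC ⟨(w, i), ⟨hwW, mem_univ i⟩, rfl⟩)
  have hlarge : C < φ' |dotp (G i) xs| := hφ'C ⟨abs_pos.2 hi, hsmall⟩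
  nlinarith

/-- lower bound theory for the `ℓ₁`-fidelity model. Under the
assumptions on `φ`, there is a constant `θ₁ > 0`, independent of the
minimizer, such that every local minimizer `x*` of `F` (with `q = 1`)
satisfies, for every `i ∈ J`, either `G_iᵀ x* = 0` or `|G_iᵀ x*| ≥ θ₁`. -/
theorem lower_bound_l1_fidelity {M N : ℕ} (hM : 0 < M) (hN : 0 < N)
    {ι : Type} [Fintype ι]
    (A : Matrix (Fin M) (Fin N) ℝ) (b : Fin M → ℝ) (G : ι → Fin N → ℝ)
    (β : ℝ) (hβ : 0 < β)
    (φ φ' : ℝ → ℝ) (hφ : PhiAssumption φ φ') :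
    ∃ θ₁ > (0 : ℝ), ∀ xs : Fin N → ℝ,
      (∃ ε > (0 : ℝ), ∀ x : Fin N → ℝ, norm2 (x - xs) < ε →
        objF1 φ A b G β xs ≤ objF1 φ A b G β x) →
      ∀ i : ι, dotp (G i) xs = 0 ∨ θ₁ ≤ |dotp (G i) xs| :=
  lower_bound_l1_fidelity_general A b G β hβ φ φ' hφ
end

section
/- Let τ ≥ 0 and let {x^k}_{k≥0} be a sequence in ℝ^N such that for every k ≥ 0 and every i ∈ J \ T(x^k), G_iᵀ x^{k+1} = 0 (the thresholding support-shrinking property). Then for every k ≥ 0, T(x^{k+1}) ⊆ S(x^{k+1}) ⊆ T(x^k) ⊆ S(x^k), and both the support and the τ-support sequences converge in finitely many iterations: there exists an integer K ≥ 0 such that S(x^k) = T(x^k) = S(x^K) for every k ≥ K. -/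
/-- The support `S(x) = {i ∈ J : G_iᵀ x ≠ 0}`. -/
def supp {N : ℕ} {ι : Type} (G : ι → Fin N → ℝ) (x : Fin N → ℝ) : Set ι :=
  {i : ι | dotp (G i) x ≠ 0}

/-- The `τ`-support `T(x) = {i ∈ J : |G_iᵀ x| > τ}`. -/
def tsupp {N : ℕ} {ι : Type} (G : ι → Fin N → ℝ) (τ : ℝ) (x : Fin N → ℝ) : Set ι :=
  {i : ι | τ < |dotp (G i) x|}


/-
Since `τ ≥ 0`, the τ-support lies inside the support, and the shrinking property puts the
support of `x^{k+1}` inside the τ-support of `x^k`. The supports therefore form a decreasing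
sequence of subsets of the finite set `J`, which must become constant from some `K` on; once it
is, the chain `S(x^{k+1}) ⊆ T(x^k) ⊆ S(x^k)` collapses and forces `T(x^k) = S(x^k)`.
-/

section

variable {N : ℕ} {ι : Type} (G : ι → Fin N → ℝ) {τ : ℝ}

theorem tsupp_subset_supp (hτ : 0 ≤ τ) (y : Fin N → ℝ) : tsupp G τ y ⊆ supp G y := by
  intro i hi h0
  have hi : τ < |dotp (G i) y| := hi
  rw [h0, abs_zero] at hi
  exact hi.not_ge hτ

theorem supp_subset_tsupp_of_shrink {y z : Fin N → ℝ}
    (hshrink : ∀ i, i ∉ tsupp G τ y → dotp (G i) z = 0) : supp G z ⊆ tsupp G τ y :=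
  fun i hi => by_contra fun hiy => hi (hshrink i hiy)

theorem antitone_supp_of_shrink (hτ : 0 ≤ τ) {x : ℕ → Fin N → ℝ}
    (hshrink : ∀ k i, i ∉ tsupp G τ (x k) → dotp (G i) (x (k + 1)) = 0) :
    Antitone fun k => supp G (x k) :=
  antitone_nat_of_succ_le fun k =>
    (supp_subset_tsupp_of_shrink G (hshrink k)).trans (tsupp_subset_supp G hτ (x k))

end

/-- finite convergence of the support and `τ`-support. If the
sequence `{x^k}` satisfies the thresholding support-shrinking property
(`G_iᵀ x^{k+1} = 0` whenever `i ∉ T(x^k)`), then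
`T(x^{k+1}) ⊆ S(x^{k+1}) ⊆ T(x^k) ⊆ S(x^k)` for every `k`, and there is
`K` such that `S(x^k) = T(x^k) = S(x^K)` for every `k ≥ K`. -/
theorem finite_convergence_of_support {N : ℕ} {ι : Type} [Fintype ι]
    (G : ι → Fin N → ℝ) (τ : ℝ) (hτ : 0 ≤ τ) (x : ℕ → Fin N → ℝ)
    (hshrink : ∀ k : ℕ, ∀ i : ι, i ∉ tsupp G τ (x k) → dotp (G i) (x (k + 1)) = 0) :
    (∀ k : ℕ,
      tsupp G τ (x (k + 1)) ⊆ supp G (x (k + 1)) ∧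
      supp G (x (k + 1)) ⊆ tsupp G τ (x k) ∧
      tsupp G τ (x k) ⊆ supp G (x k)) ∧
    (∃ K : ℕ, ∀ k : ℕ, K ≤ k →
      supp G (x k) = supp G (x K) ∧ tsupp G τ (x k) = supp G (x K)) := by
  refine ⟨fun k => ⟨tsupp_subset_supp G hτ _, supp_subset_tsupp_of_shrink G (hshrink k),
    tsupp_subset_supp G hτ _⟩, ?_⟩
  obtain ⟨K, hK⟩ :=
    WellFoundedLT.antitone_chain_condition (antitone_supp_of_shrink G hτ hshrink)
  refine ⟨K, fun k hk => ⟨(hK k hk).symm, ?_⟩⟩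
  have hstable : supp G (x (k + 1)) = supp G (x k) := (hK (k + 1) (by omega)).symm.trans (hK k hk)
  calc tsupp G τ (x k) = supp G (x k) :=
        (tsupp_subset_supp G hτ _).antisymm (hstable ▸ supp_subset_tsupp_of_shrink G (hshrink k))
    _ = supp G (x K) := (hK k hk).symm
end

section
/- (Subgradient lower bound for the iteration gap, quantitative form.) Let θ̄ > 0 and L ≥ 0 satisfy |φ'(s) − φ'(t)| ≤ L|s − t| for all s, t ≥ θ̄. Let ρ > 0, 0 < ε < 1, let x, x' ∈ ℝ^N, let S̄ ⊆ J satisfy |G_iᵀ x| ≥ θ̄ and |G_iᵀ x'| ≥ θ̄ for every i ∈ S̄, and let h ∈ ℝ^N satisfy ‖h‖₂ ≤ (ρε/2)‖x' − x‖₂. Then the vector s = h + Σ_{i∈S̄} (φ'(|G_iᵀ x'|) − φ'(|G_iᵀ x|))·(G_iᵀ x' / |G_iᵀ x'|)·G_i − ρ(x' − x) satisfies ‖s‖₂ ≤ (L·Σ_{i∈J} ‖G_i‖₂² + ρ(1 + ε/2))·‖x' − x‖₂. -/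
open Finset

theorem norm2_eq_norm_toLp {N : ℕ} (v : Fin N → ℝ) :
    norm2 v = ‖(WithLp.toLp 2 v : EuclideanSpace ℝ (Fin N))‖ := by
  simp only [norm2, EuclideanSpace.norm_eq, Real.norm_eq_abs, sq_abs]

theorem dotp_eq_inner_toLp {N : ℕ} (g v : Fin N → ℝ) :
    dotp g v = inner ℝ (WithLp.toLp 2 g : EuclideanSpace ℝ (Fin N)) (WithLp.toLp 2 v) := by
  simp only [dotp, PiLp.inner_apply, Real.inner_apply]

theorem abs_div_abs_self_le_one (a : ℝ) : |(a / |a|)| ≤ 1 := by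
  rw [abs_div, abs_abs]
  exact div_self_le_one _

section InnerProductSpace

variable {E : Type*} [NormedAddCommGroup E] [InnerProductSpace ℝ E]

theorem abs_sub_mul_inner_div_abs_le {φ' : ℝ → ℝ} {θ L : ℝ} (hL : 0 ≤ L)
    (hlip : ∀ s t : ℝ, θ ≤ s → θ ≤ t → |φ' s - φ' t| ≤ L * |s - t|) {g x x' : E}
    (hx : θ ≤ |inner ℝ g x|) (hx' : θ ≤ |inner ℝ g x'|) :
    |(φ' |inner ℝ g x'| - φ' |inner ℝ g x|) * (inner ℝ g x' / |inner ℝ g x'|)| ≤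
      L * ‖g‖ * ‖x' - x‖ := by
  rw [abs_mul]
  calc |(φ' |inner ℝ g x'| - φ' |inner ℝ g x|)| * |(inner ℝ g x' / |inner ℝ g x'|)|
      ≤ |(φ' |inner ℝ g x'| - φ' |inner ℝ g x|)| :=
        mul_le_of_le_one_right (abs_nonneg _) (abs_div_abs_self_le_one _)
    _ ≤ L * |inner ℝ g x' - inner ℝ g x| := by
        grw [hlip _ _ hx' hx, abs_abs_sub_abs_le_abs_sub]
    _ ≤ L * (‖g‖ * ‖x' - x‖) := by
        rw [← inner_sub_right]
        gcongr
        exact abs_real_inner_le_norm _ _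
    _ = L * ‖g‖ * ‖x' - x‖ := by ring

theorem norm_sum_smul_le_of_abs_le {ι : Type*} [Fintype ι] (s : Finset ι) (c : ι → ℝ)
    (g : ι → E) {K : ℝ} (hK : 0 ≤ K) (hc : ∀ i ∈ s, |c i| ≤ K * ‖g i‖) :
    ‖∑ i ∈ s, c i • g i‖ ≤ K * ∑ i, ‖g i‖ ^ 2 := by
  calc ‖∑ i ∈ s, c i • g i‖ ≤ ∑ i ∈ s, |c i| * ‖g i‖ := by
        simpa only [norm_smul, Real.norm_eq_abs] using norm_sum_le s fun i => c i • g i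
    _ ≤ ∑ i ∈ s, K * ‖g i‖ ^ 2 := sum_le_sum fun i hi => by
        grw [hc i hi]
        exact le_of_eq (by ring)
    _ ≤ ∑ i, K * ‖g i‖ ^ 2 :=
        sum_le_sum_of_subset_of_nonneg (subset_univ s) fun i _ _ => by positivity
    _ = K * ∑ i, ‖g i‖ ^ 2 := (mul_sum _ _ _).symm

theorem norm_inexact_subgradient_le {ι : Type*} [Fintype ι] (g : ι → E) {φ' : ℝ → ℝ}
    {θ L : ℝ} (hL : 0 ≤ L) (hlip : ∀ s t : ℝ, θ ≤ s → θ ≤ t → |φ' s - φ' t| ≤ L * |s - t|)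
    {ρ ε : ℝ} (hρ : 0 ≤ ρ) {x x' h : E} (s : Finset ι)
    (hx : ∀ i ∈ s, θ ≤ |inner ℝ (g i) x|) (hx' : ∀ i ∈ s, θ ≤ |inner ℝ (g i) x'|)
    (hh : ‖h‖ ≤ ρ * ε / 2 * ‖x' - x‖) :
    ‖h + (∑ i ∈ s, ((φ' |inner ℝ (g i) x'| - φ' |inner ℝ (g i) x|) *
        (inner ℝ (g i) x' / |inner ℝ (g i) x'|)) • g i) - ρ • (x' - x)‖ ≤
      (L * ∑ i, ‖g i‖ ^ 2 + ρ * (1 + ε / 2)) * ‖x' - x‖ := by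
  have hsum := norm_sum_smul_le_of_abs_le s
    (fun i => (φ' |inner ℝ (g i) x'| - φ' |inner ℝ (g i) x|) *
      (inner ℝ (g i) x' / |inner ℝ (g i) x'|)) g (by positivity : 0 ≤ L * ‖x' - x‖)
    fun i hi => (abs_sub_mul_inner_div_abs_le hL hlip (hx i hi) (hx' i hi)).trans_eq
      (mul_right_comm _ _ _)
  grw [norm_sub_le, norm_add_le, hh, hsum, norm_smul, Real.norm_eq_abs, abs_of_nonneg hρ]
  exact le_of_eq (by ring)

end InnerProductSpace

theorem subgradient_bound_iteration_gap_general {N : ℕ} {ι : Type} [Fintype ι]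
    (G : ι → Fin N → ℝ) (φ' : ℝ → ℝ)
    (θb L : ℝ) (hL : 0 ≤ L)
    (hlip : ∀ s t : ℝ, θb ≤ s → θb ≤ t → |φ' s - φ' t| ≤ L * |s - t|)
    (ρ ε : ℝ) (hρ : 0 < ρ)
    (x x' h : Fin N → ℝ) (Sb : Finset ι)
    (hx : ∀ i ∈ Sb, θb ≤ |dotp (G i) x|)
    (hx' : ∀ i ∈ Sb, θb ≤ |dotp (G i) x'|)
    (hh : norm2 h ≤ ρ * ε / 2 * norm2 (x' - x)) :
    norm2 (h + (∑ i ∈ Sb, ((φ' |dotp (G i) x'| - φ' |dotp (G i) x|) *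
        (dotp (G i) x' / |dotp (G i) x'|)) • G i) - ρ • (x' - x)) ≤
      (L * (∑ i : ι, norm2 (G i) ^ 2) + ρ * (1 + ε / 2)) * norm2 (x' - x) := by
  simp only [norm2_eq_norm_toLp, dotp_eq_inner_toLp] at hx hx' hh ⊢
  simpa only [WithLp.toLp_add, WithLp.toLp_sub, WithLp.toLp_smul, WithLp.toLp_sum] using
    norm_inexact_subgradient_le (fun i => WithLp.toLp 2 (G i)) hL hlip hρ.le Sb hx hx' hh

/-- subgradient lower bound for the iteration gap, quantitative
form. If `φ'` is `L`-Lipschitz on `[θ̄,∞)`, `|G_iᵀ x| ≥ θ̄` and `|G_iᵀ x'| ≥ θ̄`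
on `S̄`, and `‖h‖₂ ≤ (ρε/2)‖x' − x‖₂`, then the vector
`s = h + Σ_{i∈S̄}(φ'(|G_iᵀ x'|) − φ'(|G_iᵀ x|))·(G_iᵀ x'/|G_iᵀ x'|)·G_i − ρ(x' − x)`
satisfies `‖s‖₂ ≤ (L Σ_{i∈J} ‖G_i‖₂² + ρ(1 + ε/2)) ‖x' − x‖₂`. -/
theorem subgradient_bound_iteration_gap {N : ℕ} {ι : Type} [Fintype ι]
    (G : ι → Fin N → ℝ) (φ φ' : ℝ → ℝ)
    (hderiv : ∀ t : ℝ, 0 < t → HasDerivAt φ (φ' t) t)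
    (θb L : ℝ) (hθb : 0 < θb) (hL : 0 ≤ L)
    (hlip : ∀ s t : ℝ, θb ≤ s → θb ≤ t → |φ' s - φ' t| ≤ L * |s - t|)
    (ρ ε : ℝ) (hρ : 0 < ρ) (hε0 : 0 < ε) (hε1 : ε < 1)
    (x x' h : Fin N → ℝ) (Sb : Finset ι)
    (hx : ∀ i ∈ Sb, θb ≤ |dotp (G i) x|)
    (hx' : ∀ i ∈ Sb, θb ≤ |dotp (G i) x'|)
    (hh : norm2 h ≤ ρ * ε / 2 * norm2 (x' - x)) :
    norm2 (h + (∑ i ∈ Sb, ((φ' |dotp (G i) x'| - φ' |dotp (G i) x|) *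
        (dotp (G i) x' / |dotp (G i) x'|)) • G i) - ρ • (x' - x)) ≤
      (L * (∑ i : ι, norm2 (G i) ^ 2) + ρ * (1 + ε / 2)) * norm2 (x' - x) :=
  subgradient_bound_iteration_gap_general G φ' θb L hL hlip ρ ε hρ x x' h Sb hx hx' hh
end

section
/- (Uniform lower bound under the first-order inequality.) Suppose φ satisfies the stated assumption and let α > 0. Then there exists a constant θ > 0, depending only on α, φ and the vectors {G_i}_{i∈J}, such that every x ∈ ℝ^N satisfying Σ_{i∈S(x)} φ'(|G_iᵀ x|)·(G_iᵀ x / |G_iᵀ x|)·(G_iᵀ v) ≤ α‖v‖₂ for all v ∈ K(S(x)) has the lower bound property |G_jᵀ x| ≥ θ for every j ∈ S(x). (In the paper, α = β·Σ_{l=1}^M ‖(Aᵀ)_l‖₂, and every stationary point of the ℓ₁-fidelity model satisfies the first-order inequality, which yields the lower bound theory for that model.) -/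
open Filter Topology Finset

theorem Filter.eventually_forall_exists_fiber {α E P : Type*} [Finite P] {l : Filter α}
    (p : E → P) {Q : α → E → Prop} (h : ∀ u, ∀ᶠ a in l, Q a u) :
    ∀ᶠ a in l, ∀ u, ∃ v, p v = p u ∧ Q a v := by
  have hfiber : ∀ σ : P, ∀ᶠ a in l, ∀ u, p u = σ → ∃ v, p v = σ ∧ Q a v := by
    intro σ
    by_cases hσ : ∃ u, p u = σ
    · obtain ⟨u₀, hu₀⟩ := hσ
      filter_upwards [h u₀] with a ha _ _ using ⟨u₀, hu₀, ha⟩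
    · exact Eventually.of_forall fun a u hu => absurd ⟨u, hu⟩ hσ
  filter_upwards [eventually_all.2 hfiber] with a ha u using ha (p u) u rfl

theorem exists_pos_margin_of_sign_pattern {E ι : Type*} [Finite ι] (g : ι → E → ℝ)
    (n : E → ℝ) :
    ∃ c > (0 : ℝ), ∀ u, ∃ v, (∀ i, SignType.sign (g i v) = SignType.sign (g i u)) ∧
      ∀ i, g i u ≠ 0 → c * n v < |g i v| := by
  have hmargin : ∀ u, ∀ᶠ c in 𝓝 (0 : ℝ), ∀ i, g i u ≠ 0 → c * n u < |g i u| := by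
    refine fun u => eventually_all.2 fun i => ?_
    by_cases hi : g i u = 0
    · exact Eventually.of_forall fun _ h => absurd hi h
    · have hcont : ContinuousAt (fun c : ℝ => c * n u) 0 := (continuous_mul_const _).continuousAt
      have hzero : 0 * n u < |g i u| := by rw [zero_mul]; exact abs_pos.2 hi
      filter_upwards [hcont.eventually_lt continuousAt_const hzero] with c hc using fun _ => hc
  have hfibers := eventually_forall_exists_fiber (fun u i => SignType.sign (g i u)) hmargin
  obtain ⟨c, hc, hpos⟩ := ((hfibers.filter_mono nhdsWithin_le_nhds).and
    (self_mem_nhdsWithin (s := Set.Ioi 0))).exists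
  refine ⟨c, hpos, fun u => ?_⟩
  obtain ⟨v, hsign, hv⟩ := hc u
  refine ⟨v, fun i => congrFun hsign i, fun i hi => hv i ?_⟩
  rwa [ne_eq, ← sign_eq_zero_iff, congrFun hsign i, sign_eq_zero_iff]

theorem div_abs_mul_of_sign_eq {a b : ℝ} (h : SignType.sign b = SignType.sign a) :
    a / |a| * b = |b| := by
  rcases lt_trichotomy a 0 with ha | rfl | ha
  · rw [sign_neg ha, sign_eq_neg_one_iff] at h
    rw [abs_of_neg ha, abs_of_neg h, div_neg, div_self ha.ne]
    ring
  · rw [sign_zero, sign_eq_zero_iff] at h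
    simp [h]
  · rw [sign_pos ha, sign_eq_one_iff] at h
    rw [abs_of_pos ha, abs_of_pos h, div_self ha.ne', one_mul]

open Classical in
theorem lower_bound_from_first_order_inequality_general {N : ℕ} {ι : Type} [Fintype ι]
    (G : ι → Fin N → ℝ) (φ φ' : ℝ → ℝ) (hφ : PhiAssumption φ φ')
    (α : ℝ) :
    ∃ θ > (0 : ℝ), ∀ x : Fin N → ℝ,
      (∀ v : Fin N → ℝ, (∀ i : ι, dotp (G i) x = 0 → dotp (G i) v = 0) →
        (∑ i ∈ Finset.univ.filter (fun i : ι => dotp (G i) x ≠ 0),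
          φ' |dotp (G i) x| * (dotp (G i) x / |dotp (G i) x|) * dotp (G i) v)
        ≤ α * norm2 v) →
      ∀ j : ι, dotp (G j) x ≠ 0 → θ ≤ |dotp (G j) x| := by
  obtain ⟨c, hc, hmargin⟩ := exists_pos_margin_of_sign_pattern (fun i => dotp (G i)) norm2
  obtain ⟨θ, hθ, hlarge⟩ :=
    (nhdsGT_basis (0 : ℝ)).eventually_iff.1 (hφ.derivAtZero.eventually_gt_atTop (α / c))
  refine ⟨θ, hθ, fun x hx j hj => le_of_not_gt fun hsmall => ?_⟩
  obtain ⟨v, hsign, hv⟩ := hmargin x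
  have hvK : ∀ i, dotp (G i) x = 0 → dotp (G i) v = 0 := fun i hi => by
    simpa [hi] using hsign i
  have hsum := hx v hvK
  simp only [mul_assoc, div_abs_mul_of_sign_eq (hsign _)] at hsum
  have hterm : φ' |dotp (G j) x| * (c * norm2 v) < φ' |dotp (G j) x| * |dotp (G j) v| :=
    mul_lt_mul_of_pos_left (hv j hj) (hφ.derivPos _ (abs_pos.2 hj))
  have hsingle := single_le_sum (f := fun i => φ' |dotp (G i) x| * |dotp (G i) v|)
    (fun i hi => mul_nonneg (hφ.derivPos _ (abs_pos.2 (mem_filter.1 hi).2)).le (abs_nonneg _))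
    (mem_filter.2 ⟨mem_univ j, hj⟩)
  have hbound : φ' |dotp (G j) x| < α / c := by
    rw [lt_div_iff₀ hc]
    have hnorm : 0 ≤ norm2 v := Real.sqrt_nonneg _
    refine lt_of_mul_lt_mul_right ?_ hnorm
    linarith
  exact (hlarge ⟨abs_pos.2 hj, hsmall⟩).not_gt hbound

open Classical in
/-- uniform lower bound under the first-order inequality. For
`α > 0` there is `θ > 0`, depending only on `α`, `φ` and the vectors `{G_i}`,
such that every `x` satisfying the first-order inequality
`Σ_{i∈S(x)} φ'(|G_iᵀ x|)·(G_iᵀ x/|G_iᵀ x|)·(G_iᵀ v) ≤ α‖v‖₂` for all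
`v ∈ K(S(x))` has `|G_jᵀ x| ≥ θ` for every `j ∈ S(x)`. -/
theorem lower_bound_from_first_order_inequality {N : ℕ} {ι : Type} [Fintype ι]
    (G : ι → Fin N → ℝ) (φ φ' : ℝ → ℝ) (hφ : PhiAssumption φ φ')
    (α : ℝ) (hα : 0 < α) :
    ∃ θ > (0 : ℝ), ∀ x : Fin N → ℝ,
      (∀ v : Fin N → ℝ, (∀ i : ι, dotp (G i) x = 0 → dotp (G i) v = 0) →
        (∑ i ∈ Finset.univ.filter (fun i : ι => dotp (G i) x ≠ 0),
          φ' |dotp (G i) x| * (dotp (G i) x / |dotp (G i) x|) * dotp (G i) v)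
        ≤ α * norm2 v) →
      ∀ j : ι, dotp (G j) x ≠ 0 → θ ≤ |dotp (G j) x| :=
  lower_bound_from_first_order_inequality_general G φ φ' hφ α
end
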